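/- arXiv:1810.02460 — 5 statements merged into one kernel-verified Lean document; each statement's English description precedes it below -/
import Mathlib

section
/- For every integer m ≥ 3, the circulant matrix B_m is invertible (over ℝ) if and only if m is not divisible by 4. -/
/-!
Write `P` for the permutation matrix of the cyclic shift `i ↦ i + 1` on `Fin m`. For `m ≥ 3`,
`B_m = P + P⁻¹ = (1 + P²) P⁻¹`, so `B_m` is invertible exactly when `1 + P²` is.
If `4 ∤ m`, then `(P²)^N = 1` for some odd `N`, and `(1 + P²) ∑_{k < N} (-P²)^k = 1 + P^{2N} = 2`.
If `4 ∣ m`, the vector `v j = cos (π j / 2)` is well defined on `ℤ/m` and satisfies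
`v (j + 2) = - v j`, so it lies in the kernel of `1 + P²`.
-/

/-- The m×m circulant matrix with entries 1 at positions `j ≡ i+1 (mod m)` and
`j ≡ i−1 (mod m)`, and 0 otherwise. -/
def Bmat (m : ℕ) : Matrix (Fin m) (Fin m) ℝ :=
  Matrix.of fun i j => if j.val = (i.val + 1) % m ∨ j.val = (i.val + m - 1) % m then 1 else 0

open Matrix Finset Real

theorem isUnit_one_add_of_pow_eq_one_of_odd {R : Type*} [Ring R] {x : R} {n : ℕ}
    (h2 : IsUnit (2 : R)) (hn : Odd n) (hx : x ^ n = 1) : IsUnit (1 + x) := by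
  have hmul : (1 + x) * ∑ i ∈ range n, (-x) ^ i = 2 := by
    simpa [hn.neg_pow, hx, one_add_one_eq_two] using mul_neg_geom_sum (-x) n
  have hcomm : Commute (1 + x) (∑ i ∈ range n, (-x) ^ i) :=
    (Commute.one_left _).add_left <|
      Commute.sum_right _ _ _ fun i _ ↦ (Commute.refl x).neg_right.pow_right i
  exact (hcomm.isUnit_mul_iff.mp (hmul ▸ h2)).1

namespace Matrix

variable {n : Type*} [Fintype n] [DecidableEq n]

theorem permMatrix_pow {R : Type*} [Semiring R] (σ : Equiv.Perm n) (k : ℕ) :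
    (σ ^ k).permMatrix R = σ.permMatrix R ^ k := by
  simpa using map_pow (permMatrixHom (n := n) (R := R)) σ⁻¹ k

theorem not_isUnit_one_add_permMatrix_of_comp_eq_neg {K : Type*} [Field K] (σ : Equiv.Perm n)
    {v : n → K} (hv : v ≠ 0) (hσ : v ∘ σ = -v) : ¬ IsUnit (1 + σ.permMatrix K) := fun hu ↦
  hv <| mulVec_injective_iff_isUnit.mpr hu <| by
    rw [add_mulVec, one_mulVec, permMatrix_mulVec, hσ, mulVec_zero, add_neg_cancel]

end Matrix

theorem exists_odd_dvd_two_mul_of_not_four_dvd {m : ℕ} (h4 : ¬ 4 ∣ m) :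
    ∃ N, Odd N ∧ m ∣ 2 * N := by
  rcases Nat.even_or_odd' m with ⟨k, rfl | rfl⟩
  · exact ⟨k, Nat.odd_iff.mpr (by omega), dvd_rfl⟩
  · exact ⟨2 * k + 1, odd_two_mul_add_one k, dvd_mul_left _ _⟩

theorem Real.cos_pi_mul_mod_div_two {a m : ℕ} (h4 : 4 ∣ m) :
    cos (π * (a % m : ℕ) / 2) = cos (π * a / 2) := by
  obtain ⟨k, rfl⟩ := h4
  have ha : (a : ℝ) = (a % (4 * k) : ℕ) + 4 * k * (a / (4 * k) : ℕ) := by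
    exact_mod_cast (Nat.mod_add_div a (4 * k)).symm
  rw [ha, ← cos_add_nat_mul_two_pi _ (k * (a / (4 * k)))]
  push_cast
  ring_nf

section

variable {m : ℕ} [NeZero m]

theorem Fin.val_sub_one_of_one_lt (hm : 1 < m) (i : Fin m) :
    (i - 1).val = (i.val + m - 1) % m := by
  rw [Fin.sub_def, Fin.val_one', Nat.mod_eq_of_lt hm]
  change (m - 1 + i.val) % m = _
  congr 1
  omega

theorem Fin.one_ne_neg_one_of_three_le (hm : 3 ≤ m) : (1 : Fin m) ≠ -1 := by
  rw [Ne, eq_neg_iff_add_eq_zero, Fin.ext_iff, Fin.val_add, Fin.val_one',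
    Nat.mod_eq_of_lt (by omega : 1 < m), Fin.val_zero, Nat.mod_eq_of_lt (by omega)]
  omega

open Fin.CommRing in
theorem addRight_two_pow_eq_one {N : ℕ} (h : m ∣ 2 * N) :
    Equiv.addRight (2 : Fin m) ^ N = 1 := by
  rw [Equiv.nsmul_addRight, nsmul_eq_mul, mul_comm, ← Nat.cast_ofNat, ← Nat.cast_mul,
    Fin.natCast_eq_zero.mpr h, Equiv.addRight_zero]

theorem Bmat_eq_permMatrix_add (hm : 3 ≤ m) :
    Bmat m = (Equiv.addRight (1 : Fin m)).permMatrix ℝ +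
      (Equiv.addRight (-1 : Fin m)).permMatrix ℝ := by
  ext i j
  have hsucc : j.val = (i.val + 1) % m ↔ i + 1 = j := by
    rw [Fin.ext_iff, Fin.val_add, Fin.val_one', Nat.add_mod_mod, eq_comm]
  have hpred : j.val = (i.val + m - 1) % m ↔ i + -1 = j := by
    rw [← sub_eq_add_neg, Fin.ext_iff, Fin.val_sub_one_of_one_lt (by omega), eq_comm]
  have hne : i + 1 ≠ i + -1 := fun h ↦ Fin.one_ne_neg_one_of_three_le hm (add_left_cancel h)
  simp only [Bmat, of_apply, Matrix.add_apply, PEquiv.toMatrix_apply, Equiv.toPEquiv_apply,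
    Option.mem_def, Option.some_inj, Equiv.coe_addRight, hsucc, hpred]
  by_cases hj : i + 1 = j
  · subst hj
    simp [hne.symm]
  · simp [hj]

theorem Bmat_eq_one_add_permMatrix_mul (hm : 3 ≤ m) :
    Bmat m = (1 + (Equiv.addRight (2 : Fin m)).permMatrix ℝ) *
      (Equiv.addRight (-1 : Fin m)).permMatrix ℝ := by
  rw [Bmat_eq_permMatrix_add hm, add_mul, one_mul, ← permMatrix_mul, ← Equiv.addRight_add,
    show (2 : Fin m) + -1 = 1 by grind, add_comm]

theorem isUnit_Bmat_iff (hm : 3 ≤ m) :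
    IsUnit (Bmat m) ↔ IsUnit (1 + (Equiv.addRight (2 : Fin m)).permMatrix ℝ) := by
  have hu : IsUnit ((Equiv.addRight (-1 : Fin m)).permMatrix ℝ) := by
    simpa using (Group.isUnit (Equiv.addRight (1 : Fin m))).map (permMatrixHom (R := ℝ))
  rw [Bmat_eq_one_add_permMatrix_mul hm]
  exact hu.mul_right_iff

theorem isUnit_one_add_permMatrix_addRight_two (h4 : ¬ 4 ∣ m) :
    IsUnit (1 + (Equiv.addRight (2 : Fin m)).permMatrix ℝ) := by
  obtain ⟨N, hN, hdvd⟩ := exists_odd_dvd_two_mul_of_not_four_dvd h4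
  have h2 : IsUnit (2 : Matrix (Fin m) (Fin m) ℝ) :=
    map_ofNat (algebraMap ℝ (Matrix (Fin m) (Fin m) ℝ)) 2 ▸ (IsUnit.mk0 _ two_ne_zero).map _
  refine isUnit_one_add_of_pow_eq_one_of_odd h2 hN ?_
  rw [← permMatrix_pow, addRight_two_pow_eq_one hdvd, permMatrix_one]

theorem not_isUnit_one_add_permMatrix_addRight_two (h4 : 4 ∣ m) :
    ¬ IsUnit (1 + (Equiv.addRight (2 : Fin m)).permMatrix ℝ) := by
  set v : Fin m → ℝ := fun i ↦ cos (π * i.val / 2)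
  have hv : v ≠ 0 := fun h ↦ by simpa [v] using congrFun h 0
  refine not_isUnit_one_add_permMatrix_of_comp_eq_neg _ hv (funext fun i ↦ ?_)
  have hval : (i + 2).val = (i.val + 2) % m := by
    rw [Fin.val_add]
    simp only [Fin.coe_ofNat_eq_mod, Nat.add_mod_mod]
  simp only [v, Function.comp_apply, Equiv.coe_addRight, Pi.neg_apply, hval,
    cos_pi_mul_mod_div_two h4]
  push_cast
  rw [mul_add, add_div, mul_div_cancel_right₀ _ two_ne_zero, cos_add_pi]

end

/-- For every integer `m ≥ 3`, the circulant matrix `B_m` is invertible (over ℝ)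
if and only if `m` is not divisible by 4. -/
theorem Bmat_isUnit_iff_not_four_dvd (m : ℕ) (hm : 3 ≤ m) :
    IsUnit (Bmat m) ↔ ¬ (4 ∣ m) := by
  have : NeZero m := ⟨by omega⟩
  rw [isUnit_Bmat_iff hm]
  exact ⟨fun hu h4 ↦ not_isUnit_one_add_permMatrix_addRight_two h4 hu,
    isUnit_one_add_permMatrix_addRight_two⟩
end

section
/- Let n ≥ 1 and c : Fin n → ℂ. The determinant of the n×n circulant matrix with entries A_{ij} = c_{j−i (mod n)} equals the product over j = 0, …, n−1 of Σ_{k=0}^{n−1} c_k ω^{jk}, where ω = exp(2πi/n); that is, the determinant of a circulant matrix is the product of its associated polynomial evaluated at all n-th roots of unity. -/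
open scoped BigOperators

/-- The determinant of the n×n circulant matrix with entries `A i j = c ((j−i) mod n)`
equals the product over all `j` of the associated polynomial `Σ_k c_k x^k`
evaluated at the n-th roots of unity `ω^j`, where `ω = exp(2πi/n)`. -/
theorem circulant_det_eq_prod_of_roots_of_unity (n : ℕ) (hn : 1 ≤ n) (c : Fin n → ℂ) :
    Matrix.det (Matrix.of fun i j : Fin n =>
        c ⟨(j.val + n - i.val) % n, Nat.mod_lt _ (lt_of_lt_of_le Nat.zero_lt_one hn)⟩) =
      ∏ j : Fin n, ∑ k : Fin n,
        c k * Complex.exp (2 * Real.pi * Complex.I / n) ^ (j.val * k.val) := by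
  have hn0 : n ≠ 0 := Nat.one_le_iff_ne_zero.mp hn
  set ω : ℂ := Complex.exp (2 * Real.pi * Complex.I / n) with hω
  have hprim : IsPrimitiveRoot ω n := Complex.isPrimitiveRoot_exp n hn0
  have hω1 : ω ^ n = 1 := hprim.pow_eq_one
  have hmod : ∀ a : ℕ, ω ^ (a % n) = ω ^ a := by
    intro a
    conv_rhs => rw [← Nat.mod_add_div a n]
    rw [pow_add, pow_mul, hω1, one_pow, mul_one]
  set A : Matrix (Fin n) (Fin n) ℂ := Matrix.of fun i j : Fin n =>
        c ⟨(j.val + n - i.val) % n, Nat.mod_lt _ (lt_of_lt_of_le Nat.zero_lt_one hn)⟩ with hA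
  set V : Matrix (Fin n) (Fin n) ℂ := Matrix.vandermonde fun i : Fin n => ω ^ i.val with hV
  have hVdet : V.det ≠ 0 := by
    rw [hV, Matrix.det_vandermonde_ne_zero_iff]
    intro i j hij
    exact Fin.ext (hprim.pow_inj i.isLt j.isLt hij)
  have hVij : ∀ i j : Fin n, V i j = ω ^ (i.val * j.val) := by
    intro i j
    simp [hV, Matrix.vandermonde, ← pow_mul]
  haveI : NeZero n := ⟨hn0⟩
  have hAc : ∀ i j : Fin n, A i j = c (j - i) := by
    intro i j
    have : (j - i).val = (j.val + n - i.val) % n := by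
      rw [Fin.sub_def]
      simp only [Fin.val_mk]
      have hi := i.isLt
      congr 1
      omega
    rw [hA]
    simp only [Matrix.of_apply]
    congr 1
    exact Fin.ext this.symm
  have key : A * V = V * Matrix.diagonal (fun j : Fin n =>
      ∑ k : Fin n, c k * ω ^ (j.val * k.val)) := by
    ext i j
    rw [Matrix.mul_apply, Matrix.mul_diagonal]
    calc ∑ k : Fin n, A i k * V k j
        = ∑ k : Fin n, c (k - i) * ω ^ (k.val * j.val) := by
          refine Finset.sum_congr rfl fun k _ => by rw [hAc, hVij]
      _ = ∑ m : Fin n, c m * ω ^ ((m + i).val * j.val) := by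
          refine Fintype.sum_equiv (Equiv.subRight i) _ _ fun k => ?_
          simp [Equiv.subRight]
      _ = ∑ m : Fin n, c m * (ω ^ (i.val * j.val) * ω ^ (j.val * m.val)) := by
          refine Finset.sum_congr rfl fun m _ => ?_
          congr 1
          rw [Fin.add_def]
          simp only []
          rw [pow_mul, hmod, ← pow_mul, add_mul, pow_add]
          ring_nf
      _ = V i j * ∑ k : Fin n, c k * ω ^ (j.val * k.val) := by
          rw [hVij, Finset.mul_sum]
          refine Finset.sum_congr rfl fun k _ => by ring
  have hdet : A.det * V.det = V.det * ∏ j : Fin n, ∑ k : Fin n, c k * ω ^ (j.val * k.val) := by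
    rw [← Matrix.det_mul, key, Matrix.det_mul, Matrix.det_diagonal]
  rw [mul_comm] at hdet
  exact mul_left_cancel₀ hVdet hdet
end

section
/- For every integer m ≥ 5 divisible by 4, the (m−2)×m real matrix B_m^− obtained from the circulant matrix B_m by deleting its last two rows has full row rank; equivalently, the linear map ℝ^m → ℝ^{m−2} given by w ↦ B_m^− w is surjective. -/
open Matrix

theorem Matrix.mulVec_apply_of_row_eq_single_add_single {n R : Type*} [Fintype n] [DecidableEq n]
    [NonAssocSemiring R] {M : Matrix n n R} {i a b : n}
    (hrow : M i = Pi.single a 1 + Pi.single b 1) (w : n → R) :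
    (M *ᵥ w) i = w a + w b := by
  change M i ⬝ᵥ w = _
  rw [hrow, add_dotProduct, single_dotProduct, single_dotProduct, one_mul, one_mul]

theorem Pi.single_add_single_apply_of_ne {ι R : Type*} [DecidableEq ι] [AddZeroClass R] [One R]
    {a b : ι} (hab : a ≠ b) (j : ι) :
    (Pi.single a 1 + Pi.single b 1 : ι → R) j = if j = a ∨ j = b then 1 else 0 := by
  by_cases hja : j = a <;> by_cases hjb : j = b <;> simp_all

theorem Bmat_row_zero {m : ℕ} (hm : 3 ≤ m) :
    Bmat m ⟨0, by omega⟩ = Pi.single ⟨1, by omega⟩ 1 + Pi.single ⟨m - 1, by omega⟩ 1 := by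
  funext j
  rw [Pi.single_add_single_apply_of_ne (by rw [Ne, Fin.mk.injEq]; omega)]
  simp only [Bmat, of_apply, Fin.ext_iff, Nat.zero_add, Nat.mod_eq_of_lt (by omega : 1 < m),
    Nat.mod_eq_of_lt (by omega : m - 1 < m)]

theorem Bmat_row_succ {m k : ℕ} (hk : k + 2 < m) :
    Bmat m ⟨k + 1, by omega⟩ = Pi.single ⟨k + 2, hk⟩ 1 + Pi.single ⟨k, by omega⟩ 1 := by
  funext j
  rw [Pi.single_add_single_apply_of_ne (by rw [Ne, Fin.mk.injEq]; omega)]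
  simp only [Bmat, of_apply, Fin.ext_iff, show k + 1 + m - 1 = k + m by omega, Nat.add_mod_right,
    Nat.mod_eq_of_lt hk, Nat.mod_eq_of_lt (by omega : k < m)]

def skipSumSolution {G : Type*} [AddCommGroup G] (d : ℕ → G) : ℕ → G
  | 0 => 0
  | 1 => 0
  | k + 2 => d (k + 1) - skipSumSolution d k

theorem skipSumSolution_add {G : Type*} [AddCommGroup G] (d : ℕ → G) (k : ℕ) :
    skipSumSolution d (k + 2) + skipSumSolution d k = d (k + 1) := by
  rw [skipSumSolution, sub_add_cancel]

theorem Bmat_deleteLastTwoRows_surjective_general (m : ℕ) :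
    Function.Surjective (fun w : Fin m → ℝ => fun i : Fin (m - 2) =>
      (Bmat m).mulVec w ⟨i.val, lt_of_lt_of_le i.isLt (Nat.sub_le m 2)⟩) := by
  intro d
  obtain hm | hm := lt_or_ge m 3
  · exact ⟨0, funext fun i => absurd i.isLt (by omega)⟩
  let d' : ℕ → ℝ := fun k => if h : k < m - 2 then d ⟨k, h⟩ else 0
  have hd' : ∀ k (hk : k < m - 2), d' k = d ⟨k, hk⟩ := fun k hk => dif_pos hk
  refine ⟨fun j => if j.val = m - 1 then d' 0 else skipSumSolution d' j, funext fun ⟨i, hi⟩ => ?_⟩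
  beta_reduce
  cases i with
  | zero =>
    rw [mulVec_apply_of_row_eq_single_add_single (Bmat_row_zero hm)]
    simp [hd' 0 hi, skipSumSolution, show 1 ≠ m - 1 by omega]
  | succ k =>
    rw [mulVec_apply_of_row_eq_single_add_single (Bmat_row_succ (m := m) (k := k) (by omega))]
    simp [hd' _ hi, skipSumSolution_add, show k + 2 ≠ m - 1 by omega, show k ≠ m - 1 by omega]

/-- For `m ≥ 5` divisible by 4, the (m−2)×m matrix `B_m^−` obtained from `B_m` by
deleting its last two rows has full row rank: the map `w ↦ B_m^− w` is surjective. -/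
theorem Bmat_deleteLastTwoRows_surjective (m : ℕ) (hm : 5 ≤ m) (h4 : 4 ∣ m) :
    Function.Surjective (fun w : Fin m → ℝ => fun i : Fin (m - 2) =>
      (Bmat m).mulVec w ⟨i.val, lt_of_lt_of_le i.isLt (Nat.sub_le m 2)⟩) :=
  Bmat_deleteLastTwoRows_surjective_general m
end

section
/- Let m ≥ 3 with m ≡ 2 (mod 4), let B_m be the circulant matrix, and fix k ∈ ℤ/mℤ. Define v ∈ ℝ^m by v_j = (−1)^{(d−1)/2} when d = (j−k) mod m is odd, and v_j = 0 when d is even. Then B_m v = 2 e_k, where e_k is the k-th standard basis vector. -/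
/-- For `m ≥ 3` with `m ≡ 2 (mod 4)` and any index `k`, the alternating-sign vector
`v` with `v_j = (−1)^((d−1)/2)` when the cyclic distance `d = (j−k) mod m` is odd
and `v_j = 0` otherwise satisfies `B_m v = 2 e_k`. -/
theorem Bmat_mulVec_alternating (m : ℕ) (hm : 3 ≤ m) (h4 : m % 4 = 2) (k : Fin m) :
    let v : Fin m → ℝ := fun j =>
      if ((j.val + m - k.val) % m) % 2 = 1 then
        (-1 : ℝ) ^ ((((j.val + m - k.val) % m) - 1) / 2)
      else 0
    (Bmat m).mulVec v = fun i => if i = k then 2 else 0 := by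
  intro v
  funext i
  have hm0 : 0 < m := by omega
  have hK : k.val < m := k.isLt
  have h1 : (i.val + 1) % m < m := Nat.mod_lt _ hm0
  have h2 : (i.val + m - 1) % m < m := Nat.mod_lt _ hm0
  set j1 : Fin m := ⟨(i.val + 1) % m, h1⟩ with hj1
  set j2 : Fin m := ⟨(i.val + m - 1) % m, h2⟩ with hj2
  have hne : j1 ≠ j2 := by
    simp only [hj1, hj2, Ne, Fin.mk.injEq]
    intro h
    have hmod : (i.val + 1) ≡ (i.val + m - 1) [MOD m] := h
    have hd := (Nat.modEq_iff_dvd' (by omega)).mp hmod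
    rw [show i.val + m - 1 - (i.val + 1) = m - 2 by omega] at hd
    have := Nat.le_of_dvd (by omega) hd
    omega
  -- reduce the mulVec sum to two terms
  have hsum : (Bmat m).mulVec v i = v j1 + v j2 := by
    have step : ∀ j : Fin m,
        (if j.val = (i.val + 1) % m ∨ j.val = (i.val + m - 1) % m then (1:ℝ) else 0) * v j
          = (if j = j1 then v j else 0) + (if j = j2 then v j else 0) := by
      intro j
      have e1 : j.val = (i.val + 1) % m ↔ j = j1 := by
        rw [Fin.ext_iff]
      have e2 : j.val = (i.val + m - 1) % m ↔ j = j2 := by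
        rw [Fin.ext_iff]
      by_cases hA : j = j1
      · subst hA
        simp [e1, e2, hne]
      · by_cases hB : j = j2
        · subst hB
          simp [e1, e2, hA]
        · simp [e1, e2, hA, hB]
    simp only [Matrix.mulVec, dotProduct, Bmat, Matrix.of_apply]
    rw [Finset.sum_congr rfl fun j _ => step j, Finset.sum_add_distrib,
      Finset.sum_ite_eq' Finset.univ j1 v, Finset.sum_ite_eq' Finset.univ j2 v]
    simp
  rw [hsum]
  have hc : i.val + m - k.val = i.val + (m - k.val) := by omega
  set c := m - k.val with hcdef
  set d := (i.val + m - k.val) % m with hddef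
  have hd : d < m := Nat.mod_lt _ hm0
  have hdc : d = (i.val + c) % m := by rw [hddef, hc]
  have hD1 : ((i.val + 1) % m + m - k.val) % m = (d + 1) % m := by
    conv_rhs => rw [hdc, Nat.mod_add_mod]
    rw [show (i.val + 1) % m + m - k.val = (i.val + 1) % m + c by omega, Nat.mod_add_mod]
    congr 1; omega
  have hD2 : ((i.val + m - 1) % m + m - k.val) % m = (d + m - 1) % m := by
    conv_rhs => rw [show d + m - 1 = d + (m - 1) by omega, hdc, Nat.mod_add_mod]
    rw [show (i.val + m - 1) % m + m - k.val = (i.val + m - 1) % m + c by omega,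
      Nat.mod_add_mod]
    congr 1; omega
  have hik : i = k ↔ d = 0 := by
    constructor
    · intro h
      rw [hddef, h, show k.val + m - k.val = m by omega, Nat.mod_self]
    · intro h0
      have hdvd : m ∣ i.val + m - k.val := Nat.dvd_of_mod_eq_zero (hddef ▸ h0)
      have := Nat.eq_of_dvd_of_lt_two_mul (by omega) hdvd (by omega)
      exact Fin.ext (by omega)
  have hm2 : (2 : ℕ) ∣ m := Nat.dvd_of_mod_eq_zero (by omega)
  simp only [v, hj1, hj2]
  rw [hD1, hD2]
  by_cases hdk : d = 0
  · rw [hdk]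
    rw [if_pos (hik.mpr hdk)]
    rw [show (0 + 1) % m = 1 from Nat.mod_eq_of_lt (by omega),
      show (0 + m - 1) % m = m - 1 by
        rw [show 0 + m - 1 = m - 1 by omega]; exact Nat.mod_eq_of_lt (by omega)]
    rw [if_pos (by omega : (1 : ℕ) % 2 = 1), if_pos (by omega : (m - 1) % 2 = 1)]
    have he : Even ((m - 1 - 1) / 2) := Nat.even_iff.mpr (by omega)
    rw [show (1 - 1) / 2 = 0 by omega, pow_zero, he.neg_one_pow]
    norm_num
  · rw [if_neg (fun h => hdk (hik.mp h))]
    have hD2' : (d + m - 1) % m = d - 1 := by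
      rw [show d + m - 1 = (d - 1) + m by omega, Nat.add_mod_right]
      exact Nat.mod_eq_of_lt (by omega)
    rcases Nat.even_or_odd d with he | ho
    · -- d even, d ≥ 2
      have hde : d % 2 = 0 := Nat.even_iff.mp he
      have hmm : m % 2 = 0 := by omega
      have hD1' : (d + 1) % m = d + 1 := Nat.mod_eq_of_lt (by omega)
      rw [hD1', hD2']
      rw [if_pos (by omega : (d + 1) % 2 = 1), if_pos (by omega : (d - 1) % 2 = 1)]
      rw [show (d + 1 - 1) / 2 = (d - 1 - 1) / 2 + 1 by omega, pow_succ]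
      ring
    · -- d odd
      have hdo : d % 2 = 1 := Nat.odd_iff.mp ho
      rw [hD2']
      have p1 : (d + 1) % m % 2 = 0 := by
        rw [Nat.mod_mod_of_dvd _ hm2]; omega
      rw [if_neg (by omega), if_neg (by omega)]
      norm_num
end

section
/- Let A be the 4×8 real matrix whose four rows, acting on w = (w_0,…,w_7) ∈ ℝ^8, compute w_1+w_5−w_2−w_4, w_6+w_6−w_3−w_5, w_0+w_2−w_7−w_7, and w_1+w_3−w_0−w_4. Then A has full row rank 4, A𝟙 = 0 for the all-ones vector 𝟙, and for every b ∈ ℝ^4 there exists w ∈ ℝ^8 with A w = b and w_i ≥ 0 for all i. -/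
/-- The length-equalization system matrix for the genus-1 cutgraph pattern. -/
def Amat : Matrix (Fin 4) (Fin 8) ℝ :=
  Matrix.of ![![0,1,-1,0,-1,1,0,0],
    ![0,0,0,-1,0,-1,2,0],
    ![1,0,1,0,0,0,0,-2],
    ![-1,1,0,1,-1,0,0,0]]

lemma exists_nonneg_sol :
    ∀ b : Fin 4 → ℝ, ∃ w : Fin 8 → ℝ, Amat.mulVec w = b ∧ ∀ i, 0 ≤ w i := by
  intro b
  set t : ℝ := |b 0| + |b 1| + |b 2| + |b 3| with ht
  refine ⟨![b 2 + t, b 0 + t, t, b 3 + b 2 - b 0 + t,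
      t, t, (b 1 + b 3 + b 2 - b 0)/2 + t, t], ?_, ?_⟩
  · funext i
    fin_cases i <;>
      simp [Amat, Matrix.mulVec, dotProduct, Fin.sum_univ_succ] <;> ring
  · have h0 := abs_nonneg (b 0)
    have h1 := abs_nonneg (b 1)
    have h2 := abs_nonneg (b 2)
    have h3 := abs_nonneg (b 3)
    have n0 := neg_abs_le (b 0)
    have n1 := neg_abs_le (b 1)
    have n2 := neg_abs_le (b 2)
    have n3 := neg_abs_le (b 3)
    have p0 := le_abs_self (b 0)
    intro i
    fin_cases i
    · show (0:ℝ) ≤ b 2 + t; nlinarith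
    · show (0:ℝ) ≤ b 0 + t; nlinarith
    · show (0:ℝ) ≤ t; nlinarith
    · show (0:ℝ) ≤ b 3 + b 2 - b 0 + t; nlinarith
    · show (0:ℝ) ≤ t; nlinarith
    · show (0:ℝ) ≤ t; nlinarith
    · show (0:ℝ) ≤ (b 1 + b 3 + b 2 - b 0)/2 + t; nlinarith
    · show (0:ℝ) ≤ t; nlinarith

/-- The matrix has full row rank 4, the all-ones vector lies in its kernel, and
the system `A w = b` has a non-negative solution for every right-hand side `b`. -/
theorem equalizable :
    Amat.rank = 4 ∧ Amat.mulVec (fun _ => 1) = 0 ∧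
    ∀ b : Fin 4 → ℝ, ∃ w : Fin 8 → ℝ, Amat.mulVec w = b ∧ ∀ i, 0 ≤ w i := by
  refine ⟨?_, ?_, exists_nonneg_sol⟩
  · have hsurj : Function.Surjective Amat.mulVecLin := by
      intro b
      obtain ⟨w, hw, -⟩ := exists_nonneg_sol b
      exact ⟨w, hw⟩
    have : LinearMap.range Amat.mulVecLin = ⊤ := LinearMap.range_eq_top.mpr hsurj
    rw [Matrix.rank, this]
    simp [Module.finrank_fintype_fun_eq_card]
  · funext i
    fin_cases i <;>
      simp [Amat, Matrix.mulVec, dotProduct, Fin.sum_univ_succ] <;> ring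
end
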